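/- arXiv:2307.13481 — 4 statements merged into one kernel-verified Lean document; each statement's English description precedes it below -/
import Mathlib

section
/- Let Δ = [a, b) × [c, d) be an axis-parallel half-open rectangle in ℝ² with Lebesgue measure μ(Δ) = (b − a)(d − c) ≥ 2 + α. Then Δ contains at least one point of the lattice Γ, i.e., |Δ ∩ Γ| ≥ 1. -/
/-!
In a horizontal strip of height 1 the points of `Γ` have consecutive `x`-coordinates at distance
`1` or `1 + α`, so every rectangle of width `1 + α` and height `1` meets `Γ`; symmetrically so does
every rectangle of width `1` and height `1 + α`. Since `α² = 1 - α`, the diagonal map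
`(x, y) ↦ ((2 + α) x, (2 + α)⁻¹ y)` preserves `Γ` and areas, so a rectangle of area `2 + α` can be
normalized to height in `[1, 2 + α)`. It then has height `≥ 1 + α` and width `> 1`, or height `≥ 1`
and width `≥ (2 + α)/(1 + α) = 1 + α`.
-/

open Set

/-- The inverse golden ratio `α = (√5 - 1)/2`. -/
noncomputable def invGolden : ℝ := (Real.sqrt 5 - 1) / 2

/-- The rotated lattice `Γ = Aℤ²`, where `A` has rows `(1, -α)` and `(α, 1)`,
i.e. `A(n,m)ᵀ = (n - αm, αn + m)ᵀ`. -/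
def Γ : Set (ℝ × ℝ) :=
  {p | ∃ n m : ℤ, p = ((n : ℝ) - invGolden * m, invGolden * n + m)}

lemma invGolden_pos : 0 < invGolden := by
  have : (1 : ℝ) < Real.sqrt 5 := by
    rw [show (1 : ℝ) = Real.sqrt 1 by simp]; exact Real.sqrt_lt_sqrt (by norm_num) (by norm_num)
  unfold invGolden; linarith

lemma invGolden_sq : invGolden ^ 2 = 1 - invGolden := by
  unfold invGolden; linear_combination Real.sq_sqrt (show (0 : ℝ) ≤ 5 by norm_num) / 4

lemma invGolden_lt_one : invGolden < 1 := by
  nlinarith [invGolden_sq, invGolden_pos]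

lemma two_add_invGolden_pos : 0 < 2 + invGolden := by
  linarith [invGolden_pos]

lemma inv_two_add_invGolden : (2 + invGolden)⁻¹ = 1 - invGolden :=
  inv_eq_of_mul_eq_one_right (by linear_combination -invGolden_sq)

lemma ceil_add_sub_ceil_mul_mem_Icc {β : ℝ} (hβ : |β| ≤ 1) (t : ℝ) :
    β * (⌈t + β⌉ - ⌈t⌉) ∈ Icc 0 |β| := by
  rcases le_total 0 β with h | h
  · have lo : (⌈t⌉ : ℝ) ≤ ⌈t + β⌉ := by exact_mod_cast Int.ceil_mono (by linarith)
    have hi : (⌈t + β⌉ : ℝ) ≤ ⌈t⌉ + 1 := by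
      exact_mod_cast (Int.ceil_mono (by linarith [le_abs_self β])).trans_eq (Int.ceil_add_one t)
    rw [abs_of_nonneg h]
    constructor <;> nlinarith
  · have lo : (⌈t⌉ : ℝ) - 1 ≤ ⌈t + β⌉ := by
      exact_mod_cast (Int.ceil_sub_one t).symm.trans_le (Int.ceil_mono (by linarith [neg_abs_le β]))
    have hi : (⌈t + β⌉ : ℝ) ≤ ⌈t⌉ := by exact_mod_cast Int.ceil_mono (by linarith)
    rw [abs_of_nonpos h]
    constructor <;> nlinarith

/-- The least `k` with `a ≤ f k` works; it exists because `k ↦ f k - k` is monotone. -/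
lemma exists_apply_mem_Ico_of_steps {f : ℤ → ℝ} {L a b : ℝ} (hlow : ∀ k, f k + 1 ≤ f (k + 1))
    (hup : ∀ k, f (k + 1) ≤ f k + L) (hab : L ≤ b - a) : ∃ k, f k ∈ Ico a b := by
  have hmono : Monotone fun k : ℤ => f k - k :=
    monotone_int_of_le_succ fun k => by push_cast; linarith [hlow k]
  have hright {k : ℤ} (hk : 0 ≤ k) : f 0 + k ≤ f k := by
    have := hmono hk; push_cast at this; linarith
  have hleft {k : ℤ} (hk : k ≤ 0) : f k ≤ f 0 + k := by
    have := hmono hk; push_cast at this; linarith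
  have hbdd : ∃ k₀, ∀ k, a ≤ f k → k₀ ≤ k := by
    refine ⟨min 0 ⌈a - f 0⌉, fun k hk => ?_⟩
    rcases le_total 0 k with h | h
    · exact min_le_of_left_le h
    · exact min_le_of_right_le (Int.ceil_le.mpr (by linarith [hleft h]))
  have hex : ∃ k, a ≤ f k := by
    refine ⟨max 0 ⌈a - f 0⌉, ?_⟩
    have : a - f 0 ≤ ((max 0 ⌈a - f 0⌉ : ℤ) : ℝ) :=
      (Int.le_ceil _).trans (by exact_mod_cast le_max_right _ _)
    linarith [hright (le_max_left 0 ⌈a - f 0⌉)]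
  obtain ⟨k, hk, hleast⟩ := Int.exists_least_of_bdd hbdd hex
  have hprev : f (k - 1) < a := not_le.mp fun h => by linarith [hleast _ h]
  have hstep := hup (k - 1)
  rw [sub_add_cancel] at hstep
  exact ⟨k, hk, by linarith⟩

lemma exists_add_mul_ceil_mem_Ico {β : ℝ} (hβ : |β| ≤ 1) (e : ℝ) {a b : ℝ}
    (hab : 1 + |β| ≤ b - a) : ∃ k : ℤ, k + β * ⌈e + β * k⌉ ∈ Ico a b := by
  have hstep (k : ℤ) : ((k + 1 : ℤ) : ℝ) + β * ⌈e + β * ((k + 1 : ℤ) : ℝ)⌉ =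
      k + β * ⌈e + β * k⌉ + 1 + β * (⌈(e + β * k) + β⌉ - ⌈e + β * k⌉) := by
    push_cast; ring_nf
  refine exists_apply_mem_Ico_of_steps (fun k => ?_) (fun k => ?_) hab <;> rw [hstep] <;>
    linarith [(ceil_add_sub_ceil_mul_mem_Icc hβ (e + β * k)).1,
      (ceil_add_sub_ceil_mul_mem_Icc hβ (e + β * k)).2]

lemma abs_invGolden : |invGolden| = invGolden :=
  abs_of_pos invGolden_pos

lemma rect_inter_Γ_nonempty_of_tall {a b c d : ℝ} (hw : 1 ≤ b - a)
    (hh : 1 + invGolden ≤ d - c) : ((Ico a b ×ˢ Ico c d) ∩ Γ).Nonempty := by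
  obtain ⟨m, hm₁, hm₂⟩ := exists_add_mul_ceil_mem_Ico
    (abs_invGolden.trans_le invGolden_lt_one.le) a (by rwa [abs_invGolden])
  set n := ⌈a + invGolden * m⌉
  have h₁ := Int.le_ceil (a + invGolden * m)
  have h₂ := Int.ceil_lt_add_one (a + invGolden * m)
  refine ⟨((n : ℝ) - invGolden * m, invGolden * n + m), ⟨⟨?_, ?_⟩, ?_, ?_⟩, n, m, rfl⟩ <;>
    linarith

lemma rect_inter_Γ_nonempty_of_wide {a b c d : ℝ} (hw : 1 + invGolden ≤ b - a)
    (hh : 1 ≤ d - c) : ((Ico a b ×ˢ Ico c d) ∩ Γ).Nonempty := by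
  obtain ⟨n, hn₁, hn₂⟩ := exists_add_mul_ceil_mem_Ico
    ((abs_neg _).trans_le (abs_invGolden.trans_le invGolden_lt_one.le)) c
    (by rwa [abs_neg, abs_invGolden])
  set m := ⌈c + -invGolden * n⌉
  have h₁ := Int.le_ceil (c + -invGolden * n)
  have h₂ := Int.ceil_lt_add_one (c + -invGolden * n)
  refine ⟨((n : ℝ) - invGolden * m, invGolden * n + m), ⟨⟨?_, ?_⟩, ?_, ?_⟩, n, m, rfl⟩ <;>
    linarith

lemma rect_inter_Γ_nonempty_of_height_mem_Ico {a b c d : ℝ} (hh : d - c ∈ Ico 1 (2 + invGolden))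
    (harea : 2 + invGolden ≤ (b - a) * (d - c)) : ((Ico a b ×ˢ Ico c d) ∩ Γ).Nonempty := by
  obtain ⟨hh₁, hh₂⟩ := hh
  rcases le_or_gt (1 + invGolden) (d - c) with htall | hshort
  · exact rect_inter_Γ_nonempty_of_tall (by nlinarith) htall
  · have : (1 + invGolden) ^ 2 = 2 + invGolden := by linear_combination invGolden_sq
    exact rect_inter_Γ_nonempty_of_wide (by nlinarith) hh₁

lemma mem_Γ_scale {x y : ℝ} (h : (x, y) ∈ Γ) :
    ((2 + invGolden) * x, (2 + invGolden)⁻¹ * y) ∈ Γ := by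
  obtain ⟨n, m, hp⟩ := h
  simp only [Prod.mk.injEq] at hp
  refine ⟨2 * n - m, m - n, ?_⟩
  rw [inv_two_add_invGolden, hp.1, hp.2, Prod.mk.injEq]
  push_cast
  constructor
  · linear_combination (-m : ℝ) * invGolden_sq
  · linear_combination (-n : ℝ) * invGolden_sq

lemma mem_Γ_scale_inv {x y : ℝ} (h : (x, y) ∈ Γ) :
    ((2 + invGolden)⁻¹ * x, (2 + invGolden) * y) ∈ Γ := by
  obtain ⟨n, m, hp⟩ := h
  simp only [Prod.mk.injEq] at hp
  refine ⟨n + m, n + 2 * m, ?_⟩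
  rw [inv_two_add_invGolden, hp.1, hp.2, Prod.mk.injEq]
  push_cast
  constructor
  · linear_combination (m : ℝ) * invGolden_sq
  · linear_combination (n : ℝ) * invGolden_sq

lemma mem_Γ_zpow_scale (k : ℤ) {x y : ℝ} (h : (x, y) ∈ Γ) :
    ((2 + invGolden) ^ k * x, ((2 + invGolden) ^ k)⁻¹ * y) ∈ Γ := by
  have hne := two_add_invGolden_pos.ne'
  induction k using Int.induction_on generalizing x y with
  | zero => simpa using h
  | succ i ih =>
    convert mem_Γ_scale (ih h) using 2 <;> rw [zpow_add_one₀ hne] <;> field_simp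
  | pred i ih =>
    convert mem_Γ_scale_inv (ih h) using 2 <;> rw [zpow_sub_one₀ hne] <;> field_simp

lemma inv_mul_mem_Ico_iff {t x a b : ℝ} (ht : 0 < t) :
    t⁻¹ * x ∈ Ico a b ↔ x ∈ Ico (t * a) (t * b) := by
  simp only [mem_Ico, le_inv_mul_iff₀ ht, inv_mul_lt_iff₀ ht]

lemma rect_inter_Γ_nonempty_of_zpow_scale (k : ℤ) {a b c d : ℝ}
    (h : ((Ico ((2 + invGolden) ^ k * a) ((2 + invGolden) ^ k * b) ×ˢ
      Ico (((2 + invGolden) ^ k)⁻¹ * c) (((2 + invGolden) ^ k)⁻¹ * d)) ∩ Γ).Nonempty) :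
    ((Ico a b ×ˢ Ico c d) ∩ Γ).Nonempty := by
  obtain ⟨⟨x, y⟩, ⟨hx, hy⟩, hΓ⟩ := h
  have ht : 0 < (2 + invGolden) ^ k := zpow_pos two_add_invGolden_pos k
  refine ⟨(((2 + invGolden) ^ k)⁻¹ * x, (2 + invGolden) ^ k * y), ⟨?_, ?_⟩, ?_⟩
  · exact (inv_mul_mem_Ico_iff ht).mpr hx
  · rw [← inv_inv ((2 + invGolden) ^ k)]
    exact (inv_mul_mem_Ico_iff (inv_pos.mpr ht)).mpr hy
  · simpa [zpow_neg] using mem_Γ_zpow_scale (-k) hΓ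

theorem rect_contains_lattice_point_general (a b c d : ℝ) (hcd : c < d)
    (harea : 2 + invGolden ≤ (b - a) * (d - c)) :
    1 ≤ ((Ico a b ×ˢ Ico c d) ∩ Γ).encard := by
  have hpos := two_add_invGolden_pos
  obtain ⟨k, hk⟩ := exists_mem_Ico_zpow (sub_pos.mpr hcd)
    (show 1 < 2 + invGolden by linarith [invGolden_pos])
  rw [one_le_encard_iff_nonempty]
  apply rect_inter_Γ_nonempty_of_zpow_scale k
  apply rect_inter_Γ_nonempty_of_height_mem_Ico
  · rw [← mul_sub, inv_mul_mem_Ico_iff (zpow_pos hpos k), mul_one, ← zpow_add_one₀ hpos.ne']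
    exact hk
  · calc 2 + invGolden ≤ (b - a) * (d - c) := harea
      _ = _ := by field_simp

/-- Any axis-parallel half-open rectangle `[a,b) × [c,d)` of area at least
`2 + α` contains at least one point of the lattice `Γ`. -/
theorem rect_contains_lattice_point (a b c d : ℝ) (hab : a < b) (hcd : c < d)
    (harea : 2 + invGolden ≤ (b - a) * (d - c)) :
    1 ≤ ((Ico a b ×ˢ Ico c d) ∩ Γ).encard :=
  rect_contains_lattice_point_general a b c d hcd harea
end

section
/- Let Δ = [a, b) × [c, d) be an axis-parallel half-open rectangle in ℝ² with Lebesgue measure μ(Δ) = (b − a)(d − c) ≤ 1/(3 + 2α). Then Δ contains at most one point of the lattice Γ, i.e., |Δ ∩ Γ| ≤ 1. -/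
/-!
If two lattice points `(n - αm, αn + m)` and `(n' - αm', αn' + m')` differ by `(x, y)`, then
`x * y = α (p² + pq - q²)` with `p = n - n'`, `q = m - m'`, because `α² = 1 - α`. The quadratic form
`p² + pq - q²` has no nontrivial integer zero, since neither `p - αq` nor `αp + q` can vanish for
irrational `α`; hence `|x y| ≥ α`. Two distinct lattice points in `[a,b) × [c,d)` would give
`α ≤ |x y| < (b - a)(d - c) ≤ 1/(3 + 2α)`, which is false.
-/

open Set

lemma irrational_invGolden : Irrational invGolden := by
  have h5 : Irrational (Real.sqrt (5 : ℕ)) := Nat.prime_five.irrational_sqrt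
  simpa [invGolden] using (h5.sub_natCast 1).div_natCast two_ne_zero

lemma one_div_three_add_two_mul_invGolden_lt_invGolden :
    1 / (3 + 2 * invGolden) < invGolden := by
  have := invGolden_pos
  rw [div_lt_iff₀ (by linarith)]
  nlinarith [invGolden_sq]

lemma sub_invGolden_mul_ne_zero {p q : ℤ} (h : p ≠ 0 ∨ q ≠ 0) :
    (p : ℝ) - invGolden * q ≠ 0 := by
  rcases eq_or_ne q 0 with rfl | hq
  · simpa using h.resolve_right (not_not.mpr rfl)
  · exact ((irrational_invGolden.mul_intCast hq).intCast_sub p).ne_zero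

lemma invGolden_mul_add_ne_zero {p q : ℤ} (h : p ≠ 0 ∨ q ≠ 0) :
    invGolden * p + q ≠ 0 := by
  rcases eq_or_ne p 0 with rfl | hp
  · simpa using h.resolve_left (not_not.mpr rfl)
  · exact ((irrational_invGolden.mul_intCast hp).add_intCast q).ne_zero

lemma invGolden_le_abs_mul {p q : ℤ} (h : p ≠ 0 ∨ q ≠ 0) :
    invGolden ≤ |((p : ℝ) - invGolden * q) * (invGolden * p + q)| := by
  have hform : ((p : ℝ) - invGolden * q) * (invGolden * p + q)
      = invGolden * ((p ^ 2 + p * q - q ^ 2 : ℤ) : ℝ) := by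
    push_cast
    linear_combination (-(p : ℝ) * q) * invGolden_sq
  have hN : p ^ 2 + p * q - q ^ 2 ≠ 0 := by
    have := mul_ne_zero (sub_invGolden_mul_ne_zero h) (invGolden_mul_add_ne_zero h)
    rw [hform] at this
    exact_mod_cast right_ne_zero_of_mul this
  have hN1 : (1 : ℝ) ≤ |((p ^ 2 + p * q - q ^ 2 : ℤ) : ℝ)| := by
    exact_mod_cast Int.one_le_abs hN
  rw [hform, abs_mul, abs_of_pos invGolden_pos]
  exact le_mul_of_one_le_right invGolden_pos.le hN1

lemma invGolden_le_abs_sub_mul_sub {P Q : ℝ × ℝ} (hP : P ∈ Γ) (hQ : Q ∈ Γ) (hPQ : P ≠ Q) :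
    invGolden ≤ |(P.1 - Q.1) * (P.2 - Q.2)| := by
  obtain ⟨n, m, rfl⟩ := hP
  obtain ⟨n', m', rfl⟩ := hQ
  have h : n - n' ≠ 0 ∨ m - m' ≠ 0 := by
    by_contra! h
    obtain ⟨rfl, rfl⟩ : n = n' ∧ m = m' := ⟨by omega, by omega⟩
    exact hPQ rfl
  convert invGolden_le_abs_mul h using 3 <;> push_cast <;> ring

lemma abs_sub_mul_sub_lt_of_mem_Ico_prod {a b c d : ℝ} {P Q : ℝ × ℝ}
    (hP : P ∈ Ico a b ×ˢ Ico c d) (hQ : Q ∈ Ico a b ×ˢ Ico c d) :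
    |(P.1 - Q.1) * (P.2 - Q.2)| < (b - a) * (d - c) := by
  obtain ⟨⟨hP1, hP1'⟩, hP2, hP2'⟩ := hP
  obtain ⟨⟨hQ1, hQ1'⟩, hQ2, hQ2'⟩ := hQ
  rw [abs_mul]
  exact mul_lt_mul'' (abs_sub_lt_iff.mpr ⟨by linarith, by linarith⟩)
    (abs_sub_lt_iff.mpr ⟨by linarith, by linarith⟩) (abs_nonneg _) (abs_nonneg _)

theorem small_rect_contains_at_most_one_lattice_point_general (a b c d : ℝ)
    (harea : (b - a) * (d - c) ≤ 1 / (3 + 2 * invGolden)) :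
    ((Ico a b ×ˢ Ico c d) ∩ Γ).encard ≤ 1 := by
  rw [encard_le_one_iff]
  rintro P Q ⟨hPrect, hPΓ⟩ ⟨hQrect, hQΓ⟩
  by_contra hPQ
  have hlow := invGolden_le_abs_sub_mul_sub hPΓ hQΓ hPQ
  have hup := abs_sub_mul_sub_lt_of_mem_Ico_prod hPrect hQrect
  linarith [one_div_three_add_two_mul_invGolden_lt_invGolden]

/-- Any axis-parallel half-open rectangle `[a,b) × [c,d)` of area at most
`1/(3 + 2α)` contains at most one point of the lattice `Γ`. -/
theorem small_rect_contains_at_most_one_lattice_point (a b c d : ℝ)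
    (hab : a < b) (hcd : c < d)
    (harea : (b - a) * (d - c) ≤ 1 / (3 + 2 * invGolden)) :
    ((Ico a b ×ˢ Ico c d) ∩ Γ).encard ≤ 1 :=
  small_rect_contains_at_most_one_lattice_point_general a b c d harea
end

section
/- For every β > 0 and every axis-parallel half-open rectangle Δ = [a, b) × [c, d) in ℝ²: if the area (b − a)(d − c) ≥ β²(2 + α), then Δ contains at least one point of the scaled lattice βΓ; and if the area (b − a)(d − c) ≤ β²/(3 + 2α), then Δ contains at most one point of βΓ. -/
/-!
Write `φ` for the golden ratio and `ψ = -α` for its conjugate, so that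
`Γ = {(n + ψ m, -ψ n + m)}`. The coordinate product of this point is `φ⁻¹ (n² + nm - m²)`,
and `n² + nm - m²` vanishes only at the origin because `ψ` is irrational. Hence distinct
points of `βΓ` differ by a vector with `|Δx Δy| ≥ β² φ⁻¹ > β² φ⁻³`, which does not fit in a
half-open box of area at most `β² φ⁻³ = β² / (3 + 2α)`.

For the existence part we may take `β = 1`; note `2 + α = φ²`. The lattice is invariant under
the hyperbolic map `(x, y) ↦ (ψ x, φ y)`, multiplication by the unit `φ`. If
`φ^k ≤ d - c < φ^(k+1)`, the images `e = (ψ^k, φ^(k-1))` and `f = (ψ^(k+1), φ^k)` of the basis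
vectors lie in `Γ`. Walking along multiples of `e`, corrected by multiples of `f` to stay in the
strip `ℝ × [c, c + φ^k)`, the first coordinate moves monotonically in steps `ψ^k` or `ψ^k φ`,
of size at most `φ^(1-k) < b - a`, so it cannot jump over `[a, b)`.
-/

open Set

/-- The scaled lattice `βΓ = {βγ : γ ∈ Γ}`. -/
def scaledLattice (β : ℝ) : Set (ℝ × ℝ) := (fun γ : ℝ × ℝ => β • γ) '' Γ

open Real
open scoped goldenRatio

lemma exists_apply_mem_Ico_of_sub_mem_Icc {x : ℤ → ℝ} {δ w : ℝ} (hδ : 0 < δ)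
    (hx : ∀ s, x (s + 1) - x s ∈ Icc δ w) (a : ℝ) : ∃ s, x s ∈ Ico a (a + w) := by
  have hmono : StrictMono x := strictMono_int_of_lt_succ fun s => by linarith [(hx s).1]
  have hgrowth : ∀ n : ℕ, x 0 + n * δ ≤ x n ∧ x (-n) ≤ x 0 - n * δ := by
    intro n
    induction n with
    | zero => simp
    | succ n ih =>
      have hup := (hx n).1
      have hdown := (hx (-n - 1)).1
      rw [sub_add_cancel] at hdown
      push_cast
      rw [neg_add']
      constructor <;> linarith [ih.1, ih.2]
  obtain ⟨N, hN⟩ := exists_nat_gt (|a - x 0| / δ)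
  rw [div_lt_iff₀ hδ] at hN
  have habove : a < x N := by linarith [(hgrowth N).1, le_abs_self (a - x 0)]
  have hbelow : x (-N) < a := by linarith [(hgrowth N).2, neg_abs_le (a - x 0)]
  obtain ⟨s, hs, hmax⟩ := Int.exists_greatest_of_bdd (P := fun s => x s < a)
    ⟨N, fun z hz => (hmono.lt_iff_lt.1 (hz.trans habove)).le⟩ ⟨-N, hbelow⟩
  have hnext : a ≤ x (s + 1) := not_lt.1 fun h => by linarith [hmax _ h]
  exact ⟨s + 1, hnext, by linarith [(hx s).2]⟩

namespace AddSubgroup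

variable (L : AddSubgroup (ℝ × ℝ)) {a b c d : ℝ} {e f : ℝ × ℝ}

lemma exists_mem_Ico_prod_Ico_of_pos (he : e ∈ L) (hf : f ∈ L) (he₂ : 0 ≤ e.2)
    (hef : e.2 < f.2) (hfd : f.2 ≤ d - c) (he₁ : 0 < e.1) (hef₁ : 0 < e.1 - f.1)
    (hwe : e.1 ≤ b - a) (hwef : e.1 - f.1 ≤ b - a) :
    ∃ p ∈ L, p ∈ Ico a b ×ˢ Ico c d := by
  have hf₂ : 0 < f.2 := he₂.trans_lt hef
  set t : ℤ → ℤ := fun s => ⌈(c - s * e.2) / f.2⌉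
  set p : ℤ → ℝ × ℝ := fun s => s • e + t s • f
  have hpL : ∀ s, p s ∈ L := fun s => L.add_mem (L.zsmul_mem he s) (L.zsmul_mem hf _)
  have hp₂ : ∀ s, (p s).2 ∈ Ico c (c + f.2) := by
    intro s
    have h₁ := (div_le_iff₀ hf₂).1 (Int.le_ceil ((c - s * e.2) / f.2))
    have h₂ := (lt_div_iff₀ hf₂).1
      (sub_lt_iff_lt_add.2 (Int.ceil_lt_add_one ((c - s * e.2) / f.2)))
    simp only [p, Prod.snd_add, Prod.smul_snd]
    simp only [zsmul_eq_mul]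
    constructor <;> linarith
  have hstep : ∀ s, (p (s + 1)).1 - (p s).1 ∈ Icc (min e.1 (e.1 - f.1)) (b - a) := by
    intro s
    set Δ := t (s + 1) - t s
    have hdiff : p (s + 1) - p s = e + Δ • f := by
      simp only [p, Δ, add_zsmul, sub_zsmul, one_zsmul]; abel
    have hy : (p (s + 1)).2 - (p s).2 = e.2 + Δ * f.2 := by
      have := congrArg Prod.snd hdiff
      simp only [Prod.snd_sub, Prod.snd_add, Prod.smul_snd] at this
      simpa only [zsmul_eq_mul] using this
    have hx : (p (s + 1)).1 - (p s).1 = e.1 + Δ * f.1 := by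
      have := congrArg Prod.fst hdiff
      simp only [Prod.fst_sub, Prod.fst_add, Prod.smul_fst] at this
      simpa only [zsmul_eq_mul] using this
    obtain hΔ | hΔ : Δ = 0 ∨ Δ = -1 := by
      -- both heights lie in `[c, c + f.2)`, so they differ by less than `f.2`
      obtain ⟨h₀, h₀'⟩ := hp₂ s
      obtain ⟨h₁, h₁'⟩ := hp₂ (s + 1)
      have hlo : (-2 : ℝ) < Δ := lt_of_mul_lt_mul_right (by linarith) hf₂.le
      have hhi : (Δ : ℝ) < 1 := lt_of_mul_lt_mul_right (by linarith) hf₂.le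
      have : -2 < Δ := by exact_mod_cast hlo
      have : Δ < 1 := by exact_mod_cast hhi
      omega
    all_goals
      rw [hx, hΔ]
      push_cast
      constructor <;> linarith [min_le_left e.1 (e.1 - f.1), min_le_right e.1 (e.1 - f.1)]
  obtain ⟨s, hs⟩ := exists_apply_mem_Ico_of_sub_mem_Icc (x := fun s => (p s).1)
    (lt_min he₁ hef₁) hstep a
  rw [add_sub_cancel] at hs
  exact ⟨p s, hpL s, hs, (hp₂ s).1, (hp₂ s).2.trans_le (by linarith)⟩

lemma exists_mem_Ico_prod_Ico (he : e ∈ L) (hf : f ∈ L) (he₂ : 0 < e.2)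
    (hef : e.2 < f.2) (hfd : f.2 ≤ d - c) (hsign : 0 < e.1 * (e.1 - f.1))
    (hwe : |e.1| ≤ b - a) (hwef : |e.1 - f.1| ≤ b - a) :
    ∃ p ∈ L, p ∈ Ico a b ×ˢ Ico c d := by
  rcases pos_and_pos_or_neg_and_neg_of_mul_pos hsign with ⟨h₁, h₂⟩ | ⟨h₁, h₂⟩
  · rw [abs_of_pos h₁] at hwe
    rw [abs_of_pos h₂] at hwef
    exact L.exists_mem_Ico_prod_Ico_of_pos he hf he₂.le hef hfd h₁ h₂ hwe hwef
  · -- walking along `f - e` instead of `e` reverses the direction of the steps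
    rw [abs_of_neg h₁] at hwe
    rw [abs_of_neg h₂] at hwef
    refine L.exists_mem_Ico_prod_Ico_of_pos (L.sub_mem hf he) hf ?_ ?_ hfd ?_ ?_ ?_ ?_ <;>
      simp only [Prod.fst_sub, Prod.snd_sub] <;> linarith

end AddSubgroup

lemma subsingleton_Ico_prod_Ico_inter {a b c d μ : ℝ} {S : Set (ℝ × ℝ)}
    (hS : ∀ p ∈ S, ∀ q ∈ S, p ≠ q → μ ≤ |(p - q).1 * (p - q).2|)
    (harea : (b - a) * (d - c) ≤ μ) : (Ico a b ×ˢ Ico c d ∩ S).Subsingleton := by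
  rintro p ⟨⟨⟨hpa, hpb⟩, hpc, hpd⟩, hpS⟩ q ⟨⟨⟨hqa, hqb⟩, hqc, hqd⟩, hqS⟩
  by_contra hpq
  have h₁ : |(p - q).1| < b - a := abs_sub_lt_iff.2 ⟨by linarith, by linarith⟩
  have h₂ : |(p - q).2| < d - c := abs_sub_lt_iff.2 ⟨by linarith, by linarith⟩
  have hμ := hS p hpS q hqS hpq
  rw [abs_mul] at hμ
  nlinarith [abs_nonneg (p - q).1, abs_nonneg (p - q).2]

lemma invGolden_eq_neg_goldenConj : invGolden = -ψ := by
  rw [invGolden, goldenConj]; ring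

lemma two_add_invGolden : 2 + invGolden = φ ^ 2 := by
  rw [invGolden_eq_neg_goldenConj]
  linear_combination -goldenRatio_sq - goldenRatio_add_goldenConj

lemma three_add_two_mul_invGolden : 3 + 2 * invGolden = φ ^ 3 := by
  rw [invGolden_eq_neg_goldenConj]
  linear_combination (-φ - 1) * goldenRatio_sq - 2 * goldenRatio_add_goldenConj

def goldenLattice : AddSubgroup (ℝ × ℝ) where
  carrier := Γ
  add_mem' := by
    rintro _ _ ⟨n, m, rfl⟩ ⟨n', m', rfl⟩
    refine ⟨n + n', m + m', ?_⟩
    simp only [Prod.mk_add_mk, Prod.mk.injEq]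
    push_cast
    constructor <;> ring
  zero_mem' := ⟨0, 0, by simp [Prod.mk_zero_zero]⟩
  neg_mem' := by
    rintro _ ⟨n, m, rfl⟩
    refine ⟨-n, -m, ?_⟩
    simp only [Prod.neg_mk, Prod.mk.injEq]
    push_cast
    constructor <;> ring

lemma goldenConj_zpow_mul_mem_Γ {p : ℝ × ℝ} (hp : p ∈ Γ) (k : ℤ) :
    (ψ ^ k * p.1, φ ^ k * p.2) ∈ Γ := by
  -- on coefficients, `(x, y) ↦ (ψ x, φ y)` is `(n, m) ↦ (m, n + m)`
  induction k using Int.induction_on with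
  | zero => simpa using hp
  | succ k ih =>
    obtain ⟨n, m, h⟩ := ih
    simp only [Prod.mk.injEq, invGolden_eq_neg_goldenConj] at h
    refine ⟨m, n + m, ?_⟩
    rw [zpow_add_one₀ goldenConj_ne_zero, zpow_add_one₀ goldenRatio_ne_zero,
      invGolden_eq_neg_goldenConj, Prod.mk.injEq]
    push_cast
    constructor
    · linear_combination ψ * h.1 + m * goldenConj_sq
    · linear_combination
        φ * h.2 - n * goldenRatio_mul_goldenConj - m * goldenRatio_add_goldenConj
  | pred k ih =>
    obtain ⟨n, m, h⟩ := ih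
    simp only [Prod.mk.injEq, invGolden_eq_neg_goldenConj] at h
    refine ⟨m - n, n, ?_⟩
    rw [zpow_sub_one₀ goldenConj_ne_zero, zpow_sub_one₀ goldenRatio_ne_zero,
      invGolden_eq_neg_goldenConj, inv_goldenConj, inv_goldenRatio, Prod.mk.injEq]
    push_cast
    constructor
    · linear_combination
        -φ * h.1 - m * goldenRatio_mul_goldenConj - n * goldenRatio_add_goldenConj
    · linear_combination -ψ * h.2 + n * goldenConj_sq

lemma eq_zero_of_intCast_add_goldenConj_mul_intCast {n m : ℤ} (h : (n : ℝ) + ψ * m = 0) :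
    n = 0 ∧ m = 0 := by
  by_cases hm : m = 0
  · subst hm
    simpa using h
  · refine absurd ?_ (goldenConj_irrational.ne_rational (-n) m)
    rw [eq_div_iff (by exact_mod_cast hm)]
    push_cast
    linarith

lemma inv_goldenRatio_le_abs_mul_of_mem_Γ {p : ℝ × ℝ} (hp : p ∈ Γ) (hp₀ : p ≠ 0) :
    φ⁻¹ ≤ |p.1 * p.2| := by
  obtain ⟨n, m, rfl⟩ := hp
  simp only [invGolden_eq_neg_goldenConj]
  have hnorm :
      ((n : ℝ) - -ψ * m) * (-ψ * n + m) = φ⁻¹ * ((n ^ 2 + n * m - m ^ 2 : ℤ) : ℝ) := by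
    rw [inv_goldenRatio]
    push_cast
    linear_combination (-n * m : ℝ) * goldenConj_sq
  have hN : n ^ 2 + n * m - m ^ 2 ≠ 0 := by
    intro hN
    rw [hN, Int.cast_zero, mul_zero, mul_eq_zero] at hnorm
    have : n = 0 ∧ m = 0 := by
      rcases hnorm with h | h
      · exact eq_zero_of_intCast_add_goldenConj_mul_intCast (by linarith)
      · have := eq_zero_of_intCast_add_goldenConj_mul_intCast (n := m) (m := -n)
          (by push_cast; linarith)
        omega
    obtain ⟨rfl, rfl⟩ := this
    simp [Prod.mk_zero_zero] at hp₀
  rw [hnorm, abs_mul, abs_of_pos (inv_pos.2 goldenRatio_pos)]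
  refine le_mul_of_one_le_right (inv_pos.2 goldenRatio_pos).le ?_
  exact_mod_cast Int.one_le_abs hN

lemma exists_mem_Γ_Ico_prod_Ico {a b c d : ℝ} (hcd : c < d)
    (harea : φ ^ 2 ≤ (b - a) * (d - c)) :
    ∃ p ∈ Γ, p ∈ Ico a b ×ˢ Ico c d := by
  obtain ⟨k, hk, hk'⟩ := exists_mem_Ico_zpow (sub_pos.2 hcd) one_lt_goldenRatio
  have hφk : 0 < φ ^ k := zpow_pos goldenRatio_pos k
  have hab : 0 < b - a :=
    pos_of_mul_pos_left ((pow_pos goldenRatio_pos 2).trans_le harea) (sub_pos.2 hcd).le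
  have hψφ : |ψ ^ k| * φ ^ k = 1 := by
    rw [abs_zpow, ← mul_zpow, abs_of_neg goldenConj_neg, neg_mul, goldenConj_mul_goldenRatio,
      neg_neg, one_zpow]
  have hwidth : |ψ ^ k| * φ ≤ b - a := by
    refine le_of_mul_le_mul_right ?_ (zpow_pos goldenRatio_pos (k + 1))
    calc |ψ ^ k| * φ * φ ^ (k + 1) = φ ^ 2 := by
          rw [zpow_add_one₀ goldenRatio_ne_zero]; linear_combination φ ^ 2 * hψφ
      _ ≤ (b - a) * (d - c) := harea
      _ ≤ (b - a) * φ ^ (k + 1) := mul_le_mul_of_nonneg_left hk'.le hab.le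
  -- the images of the basis vectors `(1, α)` and `(-α, 1)` of `Γ`
  have he : (ψ ^ k * 1, φ ^ k * -ψ) ∈ Γ :=
    goldenConj_zpow_mul_mem_Γ (p := (1, -ψ)) ⟨1, 0, by simp [invGolden_eq_neg_goldenConj]⟩ k
  have hf : (ψ ^ k * ψ, φ ^ k * 1) ∈ Γ :=
    goldenConj_zpow_mul_mem_Γ (p := (ψ, 1)) ⟨0, 1, by simp [invGolden_eq_neg_goldenConj]⟩ k
  have hstep : ψ ^ k * 1 - ψ ^ k * ψ = ψ ^ k * φ := by
    rw [← one_sub_goldenRatio]; ring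
  refine goldenLattice.exists_mem_Ico_prod_Ico he hf ?_ ?_ ?_ ?_ ?_ ?_ <;> dsimp only
  · exact mul_pos hφk (neg_pos.2 goldenConj_neg)
  · exact mul_lt_mul_of_pos_left (by linarith [neg_one_lt_goldenConj]) hφk
  · rwa [mul_one]
  · rw [hstep, mul_one, ← mul_assoc, ← sq]
    exact mul_pos (sq_pos_of_ne_zero (zpow_ne_zero k goldenConj_ne_zero)) goldenRatio_pos
  · rw [mul_one]
    exact (le_mul_of_one_le_right (abs_nonneg _) one_lt_goldenRatio.le).trans hwidth
  · rwa [hstep, abs_mul, abs_of_pos goldenRatio_pos]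

lemma smul_mem_Ico_prod_Ico_of_mem_div {β a b c d : ℝ} (hβ : 0 < β) {p : ℝ × ℝ}
    (hp : p ∈ Ico (a / β) (b / β) ×ˢ Ico (c / β) (d / β)) : β • p ∈ Ico a b ×ˢ Ico c d := by
  obtain ⟨⟨h₁, h₂⟩, h₃, h₄⟩ := hp
  exact ⟨⟨(div_le_iff₀' hβ).1 h₁, (lt_div_iff₀' hβ).1 h₂⟩,
    (div_le_iff₀' hβ).1 h₃, (lt_div_iff₀' hβ).1 h₄⟩

lemma sq_mul_inv_goldenRatio_le_abs_mul_sub {β : ℝ} {p q : ℝ × ℝ} (hp : p ∈ scaledLattice β)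
    (hq : q ∈ scaledLattice β) (hpq : p ≠ q) : β ^ 2 * φ⁻¹ ≤ |(p - q).1 * (p - q).2| := by
  obtain ⟨γ, hγ, rfl⟩ := hp
  obtain ⟨γ', hγ', rfl⟩ := hq
  have hne : γ - γ' ≠ 0 := sub_ne_zero.2 fun h => hpq (h ▸ rfl)
  have hγγ' := inv_goldenRatio_le_abs_mul_of_mem_Γ (goldenLattice.sub_mem hγ hγ') hne
  have hscale :
      (β • γ - β • γ').1 * (β • γ - β • γ').2 = β ^ 2 * ((γ - γ').1 * (γ - γ').2) := by
    simp only [← smul_sub, Prod.smul_fst, Prod.smul_snd, smul_eq_mul]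
    ring
  rw [hscale, abs_mul, abs_of_nonneg (sq_nonneg β)]
  exact mul_le_mul_of_nonneg_left hγγ' (sq_nonneg β)

theorem scaled_lattice_point_counts_general (β : ℝ) (hβ : 0 < β) (a b c d : ℝ)
    (hcd : c < d) :
    (β ^ 2 * (2 + invGolden) ≤ (b - a) * (d - c) →
      1 ≤ ((Ico a b ×ˢ Ico c d) ∩ scaledLattice β).encard) ∧
    ((b - a) * (d - c) ≤ β ^ 2 / (3 + 2 * invGolden) →
      ((Ico a b ×ˢ Ico c d) ∩ scaledLattice β).encard ≤ 1) := by
  refine ⟨fun harea => ?_, fun harea => ?_⟩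
  · have hscaled : φ ^ 2 ≤ (b / β - a / β) * (d / β - c / β) := by
      rw [← sub_div, ← sub_div, div_mul_div_comm, ← sq, le_div_iff₀ (by positivity)]
      rw [two_add_invGolden] at harea
      linarith
    obtain ⟨p, hp, hpR⟩ := exists_mem_Γ_Ico_prod_Ico (div_lt_div_of_pos_right hcd hβ) hscaled
    exact one_le_encard_iff_nonempty.2
      ⟨β • p, smul_mem_Ico_prod_Ico_of_mem_div hβ hpR, p, hp, rfl⟩
  · rw [encard_le_one_iff_subsingleton]
    refine subsingleton_Ico_prod_Ico_inter
      (fun p hp q hq => sq_mul_inv_goldenRatio_le_abs_mul_sub hp hq) (harea.trans ?_)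
    rw [three_add_two_mul_invGolden, ← div_eq_mul_inv]
    exact div_le_div_of_nonneg_left (sq_nonneg β) goldenRatio_pos
      (le_self_pow₀ one_lt_goldenRatio.le (by norm_num))

/-- For every `β > 0` and every axis-parallel half-open rectangle
`Δ = [a,b) × [c,d)`: if the area is at least `β²(2 + α)`, then `Δ` contains at
least one point of `βΓ`; and if the area is at most `β²/(3 + 2α)`, then `Δ`
contains at most one point of `βΓ`. -/
theorem scaled_lattice_point_counts (β : ℝ) (hβ : 0 < β) (a b c d : ℝ)
    (hab : a < b) (hcd : c < d) :
    (β ^ 2 * (2 + invGolden) ≤ (b - a) * (d - c) →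
      1 ≤ ((Ico a b ×ˢ Ico c d) ∩ scaledLattice β).encard) ∧
    ((b - a) * (d - c) ≤ β ^ 2 / (3 + 2 * invGolden) →
      ((Ico a b ×ˢ Ico c d) ∩ scaledLattice β).encard ≤ 1) :=
  scaled_lattice_point_counts_general β hβ a b c d hcd
end

section
/- Any axis-parallel half-open rectangle of area 2 + α can be covered by at most 12 axis-parallel half-open rectangles, each of area at most 1/(3 + 2α); in particular, 2 + α < 12/(3 + 2α). -/
/-! Cut the rectangle into a `3 × 4` grid of congruent cells. Each cell has area `(2 + α)/12`, and
`(2 + α)(3 + 2α) = 8 + 5α < 12` because `α < 4/5`, so every cell has area below `1/(3 + 2α)`. -/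

open Set

lemma invGolden_lt_four_fifths : invGolden < 4 / 5 := by
  unfold invGolden
  have : Real.sqrt 5 < 13 / 5 := by
    rw [Real.sqrt_lt' (by norm_num)]
    norm_num
  linarith

lemma two_add_invGolden_mul_lt_twelve : (2 + invGolden) * (3 + 2 * invGolden) < 12 := by
  linear_combination 2 * invGolden_sq + 5 * invGolden_lt_four_fifths

noncomputable def partitionPoint (a b : ℝ) (n j : ℕ) : ℝ := a + j * ((b - a) / n)

lemma partitionPoint_succ_sub (a b : ℝ) (n j : ℕ) :
    partitionPoint a b n (j + 1) - partitionPoint a b n j = (b - a) / n := by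
  unfold partitionPoint
  push_cast
  ring

lemma partitionPoint_lt_succ {a b : ℝ} (hab : a < b) {n : ℕ} (hn : n ≠ 0) (j : ℕ) :
    partitionPoint a b n j < partitionPoint a b n (j + 1) := by
  have : 0 < (b - a) / n := div_pos (sub_pos.2 hab) (by positivity)
  linarith [partitionPoint_succ_sub a b n j]

lemma Ico_subset_iUnion_Ico_partitionPoint (a b : ℝ) {n : ℕ} (hn : n ≠ 0) :
    Ico a b ⊆ ⋃ j : Fin n, Ico (partitionPoint a b n j) (partitionPoint a b n (j + 1)) := by
  rintro x ⟨hax, hxb⟩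
  set δ := (b - a) / n
  have hδ : 0 < δ := div_pos (by linarith) (by positivity)
  have hq : 0 ≤ (x - a) / δ := div_nonneg (by linarith) hδ.le
  set j := ⌊(x - a) / δ⌋₊
  have hj : j < n := by
    refine (Nat.floor_lt hq).2 ((div_lt_iff₀ hδ).2 ?_)
    calc x - a < b - a := by linarith
      _ = n * δ := by simp only [δ]; field_simp
  have hlo : j * δ ≤ x - a := (le_div_iff₀ hδ).1 (Nat.floor_le hq)
  have hhi : x - a < (j + 1) * δ := (div_lt_iff₀ hδ).1 (Nat.lt_floor_add_one _)
  refine mem_iUnion.2 ⟨⟨j, hj⟩, ?_, ?_⟩ <;>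
    simp only [partitionPoint, δ] at hlo hhi ⊢ <;> push_cast <;> linarith

lemma Ico_prod_Ico_subset_iUnion_grid (a b c d : ℝ) {m n : ℕ} (hm : m ≠ 0) (hn : n ≠ 0) :
    Ico a b ×ˢ Ico c d ⊆ ⋃ k : Fin m × Fin n,
      Ico (partitionPoint a b m k.1) (partitionPoint a b m (k.1 + 1)) ×ˢ
        Ico (partitionPoint c d n k.2) (partitionPoint c d n (k.2 + 1)) := by
  rintro ⟨x, y⟩ ⟨hx, hy⟩
  obtain ⟨i, hi⟩ := mem_iUnion.1 (Ico_subset_iUnion_Ico_partitionPoint a b hm hx)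
  obtain ⟨j, hj⟩ := mem_iUnion.1 (Ico_subset_iUnion_Ico_partitionPoint c d hn hy)
  exact mem_iUnion.2 ⟨(i, j), hi, hj⟩

theorem exists_grid_cover_Ico_prod_Ico {a b c d : ℝ} (hab : a < b) (hcd : c < d)
    {m n : ℕ} (hm : m ≠ 0) (hn : n ≠ 0) :
    ∃ R : Fin (m * n) → Set (ℝ × ℝ),
      (∀ k, ∃ a' b' c' d' : ℝ, a' < b' ∧ c' < d' ∧ R k = Ico a' b' ×ˢ Ico c' d' ∧
        (b' - a') * (d' - c') = (b - a) * (d - c) / (m * n)) ∧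
      Ico a b ×ˢ Ico c d ⊆ ⋃ k, R k := by
  let cell (k : Fin m × Fin n) : Set (ℝ × ℝ) :=
    Ico (partitionPoint a b m k.1) (partitionPoint a b m (k.1 + 1)) ×ˢ
      Ico (partitionPoint c d n k.2) (partitionPoint c d n (k.2 + 1))
  refine ⟨fun k => cell (finProdFinEquiv.symm k), fun k => ?_, ?_⟩
  · refine ⟨_, _, _, _, partitionPoint_lt_succ hab hm _, partitionPoint_lt_succ hcd hn _, rfl, ?_⟩
    rw [partitionPoint_succ_sub, partitionPoint_succ_sub]
    ring
  · rw [finProdFinEquiv.symm.surjective.iUnion_comp cell]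
    exact Ico_prod_Ico_subset_iUnion_grid a b c d hm hn

/-- `2 + α < 12/(3 + 2α)`, and any axis-parallel half-open rectangle of area
`2 + α` can be covered by at most `12` axis-parallel half-open rectangles,
each of area at most `1/(3 + 2α)`. -/
theorem rect_cover_by_small_rects :
    2 + invGolden < 12 / (3 + 2 * invGolden) ∧
    ∀ a b c d : ℝ, a < b → c < d → (b - a) * (d - c) = 2 + invGolden →
      ∃ R : Fin 12 → Set (ℝ × ℝ),
        (∀ i : Fin 12, ∃ a' b' c' d' : ℝ, a' < b' ∧ c' < d' ∧
          R i = Ico a' b' ×ˢ Ico c' d' ∧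
          (b' - a') * (d' - c') ≤ 1 / (3 + 2 * invGolden)) ∧
        Ico a b ×ˢ Ico c d ⊆ ⋃ i : Fin 12, R i := by
  have hden : 0 < 3 + 2 * invGolden := by linarith [invGolden_pos]
  have key := two_add_invGolden_mul_lt_twelve
  refine ⟨(lt_div_iff₀ hden).2 key, fun a b c d hab hcd harea => ?_⟩
  obtain ⟨R, hR, hcover⟩ :=
    exists_grid_cover_Ico_prod_Ico hab hcd (m := 3) (n := 4) three_ne_zero four_ne_zero
  refine ⟨R, fun i => ?_, hcover⟩
  obtain ⟨a', b', c', d', ha', hc', hRi, hcell⟩ := hR i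
  refine ⟨a', b', c', d', ha', hc', hRi, ?_⟩
  rw [hcell, harea, div_le_div_iff₀ (by norm_num) hden]
  push_cast
  linarith
end
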